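/- Let G be a graph whose vertex set is partitioned into S_1 and S_2, where G[S_1] is K_{s_1,…,s_{r−1}}-free, all edges between S_1 and S_2 are present, and S_2 is an independent set. Assuming s_1 ≤ s_2 ≤ … ≤ s_r, the graph G contains no copy of K_{s_1,…,s_r}. -/

import Mathlib

open SimpleGraph Finset

/-- `G` is `H`-free: there is no copy of `H` in `G` as a subgraph. -/
def Free {α β : Type*} (H : SimpleGraph α) (G : SimpleGraph β) : Prop :=
  ¬ ∃ f : α ↪ β, ∀ a b, H.Adj a b → G.Adj (f a) (f b)

/-- The complete multipartite graph with `r` parts of sizes `s 0, …, s (r-1)`. -/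
def multipartite (r : ℕ) (s : Fin r → ℕ) : SimpleGraph (Σ i : Fin r, Fin (s i)) :=
  completeMultipartiteGraph fun i => Fin (s i)

/-!
Vertices in different parts of a complete multipartite graph are adjacent, so a copy of
`K_{s_1,…,s_r}` in `G` meets the independent set `Sᶜ` in at most one part `j`. The other parts
form a copy of `K_{s_1,…,ŝ_j,…,s_r}` inside `G[S]`, and since `s` is monotone this contains
`K_{s_1,…,s_{r-1}}`: the `i`-th part fits into part `j.succAbove i ≥ i`.
-/

lemma free_iff_not_isContained {α β : Type*} {H : SimpleGraph α} {G : SimpleGraph β} :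
    _root_.Free H G ↔ ¬ H ⊑ G :=
  not_congr ⟨fun ⟨f, hf⟩ => ⟨⟨⟨f, hf _ _⟩, f.injective⟩⟩,
    fun ⟨f⟩ => ⟨f.toEmbedding, fun _ _ => f.toHom.map_adj⟩⟩

lemma Fin.castSucc_le_succAbove {n : ℕ} (p : Fin (n + 1)) (i : Fin n) :
    i.castSucc ≤ p.succAbove i := by
  rcases lt_or_ge i.castSucc p with h | h
  · rw [Fin.succAbove_of_castSucc_lt _ _ h]
  · rw [Fin.succAbove_of_le_castSucc _ _ h]
    exact Fin.castSucc_lt_succ.le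

namespace SimpleGraph

variable {α β : Type*} {A : SimpleGraph α} {B : SimpleGraph β}

def Copy.codRestrict (f : Copy A B) {s : Set β} (h : ∀ a, f a ∈ s) : Copy A (B.induce s) :=
  ⟨⟨fun a => ⟨f a, h a⟩, f.toHom.map_adj⟩, fun _ _ hab => f.injective (congrArg Subtype.val hab)⟩

def completeMultipartiteGraph.copyOfEmbedding {ι κ : Type*} {V : ι → Type*} {W : κ → Type*}
    (σ : ι ↪ κ) (e : ∀ i, V i ↪ W (σ i)) :
    Copy (completeMultipartiteGraph V) (completeMultipartiteGraph W) :=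
  ⟨⟨Function.Embedding.sigmaMap σ e, fun h => σ.injective.ne h⟩,
    (Function.Embedding.sigmaMap σ e).injective⟩

lemma Copy.exists_forall_fst_ne_mem {ι : Type*} [Nonempty ι] {V : ι → Type*}
    {G : SimpleGraph β} (f : Copy (completeMultipartiteGraph V) G) {S : Set β}
    (hS : G.IsIndepSet Sᶜ) : ∃ j, ∀ x, x.1 ≠ j → f x ∈ S := by
  by_cases h : ∃ x, f x ∉ S
  · obtain ⟨x, hx⟩ := h
    refine ⟨x.1, fun y hy => ?_⟩
    by_contra hyS
    exact hS hyS hx (f.injective.ne (fun h => hy (congrArg Sigma.fst h))) (f.toHom.map_adj hy)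
  · simp only [not_exists, not_not] at h
    exact ⟨Classical.arbitrary ι, fun x _ => h x⟩

end SimpleGraph

theorem free_of_partition_general {V : Type*} (G : SimpleGraph V) (S : Set V)
    (r : ℕ) (s : Fin r → ℕ) (hmono : Monotone s)
    (hfree : _root_.Free (multipartite (r - 1) fun i => s (i.castLE (Nat.sub_le r 1)))
      (G.induce S))
    (hind : ∀ a ∉ S, ∀ b ∉ S, ¬ G.Adj a b) :
    _root_.Free (multipartite r s) G := by
  rw [free_iff_not_isContained] at hfree ⊢
  rintro ⟨f⟩
  cases r with
  | zero =>
    have : IsEmpty (Fin (0 - 1)) := Fin.isEmpty'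
    exact hfree .of_isEmpty
  | succ m =>
    obtain ⟨j, hj⟩ := f.exists_forall_fst_ne_mem fun a ha b hb _ => hind a ha b hb
    let dropPart := completeMultipartiteGraph.copyOfEmbedding (V := fun i => Fin (s i.castSucc))
      (W := fun i => Fin (s i)) ⟨j.succAbove, Fin.succAbove_right_injective⟩
      fun i => Fin.castLEEmb (hmono (Fin.castSucc_le_succAbove j i))
    exact hfree ⟨(f.comp dropPart).codRestrict fun x => hj _ (Fin.succAbove_ne j x.1)⟩

/-- If the vertex set of `G` is partitioned into `S` and its complement, the induced
graph on `S` is `K_{s_1,…,s_{r-1}}`-free, all edges between `S` and its complement are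
present, and the complement of `S` is independent, then (for `s_1 ≤ ⋯ ≤ s_r`) the graph
`G` contains no copy of `K_{s_1,…,s_r}`. -/
theorem free_of_partition {V : Type*} (G : SimpleGraph V) (S : Set V)
    (r : ℕ) (hr : 3 ≤ r) (s : Fin r → ℕ) (hpos : ∀ i, 1 ≤ s i) (hmono : Monotone s)
    (hfree : _root_.Free (multipartite (r - 1) fun i => s (i.castLE (Nat.sub_le r 1)))
      (G.induce S))
    (hcomplete : ∀ a ∈ S, ∀ b ∉ S, G.Adj a b)
    (hind : ∀ a ∉ S, ∀ b ∉ S, ¬ G.Adj a b) :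
    _root_.Free (multipartite r s) G :=
  free_of_partition_general G S r s hmono hfree hind
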